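/- arXiv:2301.08106 — 2 statements merged into one kernel-verified Lean document; each statement's English description precedes it below -/
import Mathlib

section
/- For odd n ≥ 3, the set {E_{n,n-4}, F_{n,1}, ..., F_{n,(n-1)/2}} is a linearly independent set of (n+1)/2 eigenvectors of the n-Queens graph Q(n) associated with n-4; consequently n-4 is an eigenvalue of Q(n) of multiplicity at least (n+1)/2. -/
open Finset Matrix

def queensGraph (n : ℕ) : SimpleGraph (Fin n × Fin n) where
  Adj v w := v ≠ w ∧ ((v.1 : ℤ) = w.1 ∨ (v.2 : ℤ) = w.2 ∨
    (v.1 : ℤ) + v.2 = w.1 + w.2 ∨ (v.1 : ℤ) - v.2 = w.1 - w.2)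
  symm := by constructor; rintro v w ⟨h1, h2⟩; exact ⟨h1.symm, by omega⟩
  loopless := by constructor; rintro v ⟨h1, _⟩; exact h1 rfl

instance (n : ℕ) : DecidableRel (queensGraph n).Adj := fun v w =>
  inferInstanceAs (Decidable (_ ∧ _))

/-- The vector `P_{n,λ}`; the vertex `v : Fin n × Fin n` has 1-based coordinates
`(i, j) = (v.1 + 1, v.2 + 1)`, `i ⊖ j = |i - j|`, `i ⊕ j = |i + j - (n+1)|`, and
`k = (λ + 4) - (n-1)/2`. -/
noncomputable def Pvec (n : ℕ) (lam : ℤ) (v : Fin n × Fin n) : ℝ :=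
  let i : ℤ := (v.1 : ℤ) + 1
  let j : ℤ := (v.2 : ℤ) + 1
  let k : ℤ := (lam + 4) - ((n : ℤ) - 1) / 2
  if |i - j| = (n : ℤ) - (lam + 4) then (k : ℝ)
  else if |i - j| < (n : ℤ) - (lam + 4) ∧ |i + j - ((n : ℤ) + 1)| < lam + 4 ∧
      |i - j| % 2 = ((n : ℤ) - (lam + 4)) % 2 then 1
  else 0

/-- The vector `Q_{n,λ}`. -/
noncomputable def Qvec (n : ℕ) (lam : ℤ) (v : Fin n × Fin n) : ℝ :=
  let i : ℤ := (v.1 : ℤ) + 1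
  let j : ℤ := (v.2 : ℤ) + 1
  let k : ℤ := (lam + 4) - ((n : ℤ) - 1) / 2
  if |i + j - ((n : ℤ) + 1)| = (n : ℤ) - (lam + 4) then (-k : ℝ)
  else if |i + j - ((n : ℤ) + 1)| < (n : ℤ) - (lam + 4) ∧ |i - j| < lam + 4 ∧
      |i + j - ((n : ℤ) + 1)| % 2 = ((n : ℤ) - (lam + 4)) % 2 then -1
  else 0

/-- The vector `E_{n,λ} = P_{n,λ} + Q_{n,λ}`. -/
noncomputable def Evec (n : ℕ) (lam : ℤ) (v : Fin n × Fin n) : ℝ :=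
  Pvec n lam v + Qvec n lam v

/-- The vector `C_{n,ℓ}` (1-based coordinates: the square of `v` is `(v.1+1, v.2+1)`). -/
noncomputable def Cvec (n : ℕ) (l : ℤ) (v : Fin n × Fin n) : ℝ :=
  if (v.2 : ℤ) + 1 = l ∨ (v.2 : ℤ) + 1 = (n : ℤ) + 1 - l then 1 else 0

/-- The vector `R_{n,ℓ}`. -/
noncomputable def Rvec (n : ℕ) (l : ℤ) (v : Fin n × Fin n) : ℝ :=
  if (v.1 : ℤ) + 1 = l ∨ (v.1 : ℤ) + 1 = (n : ℤ) + 1 - l then -1 else 0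

/-- The vector `F_{n,ℓ} = C_{n,ℓ} + R_{n,ℓ}`. -/
noncomputable def Fvec (n : ℕ) (l : ℤ) (v : Fin n × Fin n) : ℝ :=
  Cvec n l v + Rvec n l v


section Helpers
variable (n : ℕ)

lemma sum_ite_int (c : ℤ) (x : ℝ) :
    ∑ q : Fin n, (if (q : ℤ) = c then x else 0) = if 0 ≤ c ∧ c < n then x else 0 := by
  by_cases h : 0 ≤ c ∧ c < n
  · rw [if_pos h]
    rw [Finset.sum_eq_single_of_mem (⟨c.toNat, by omega⟩ : Fin n) (Finset.mem_univ _)]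
    · rw [if_pos (by simp; omega)]
    · intro q _ hq
      rw [if_neg]
      intro hc
      exact hq (by apply Fin.ext; simp at hc ⊢; omega)
  · rw [if_neg h]
    exact Finset.sum_eq_zero fun q _ => by
      rw [if_neg]; have := q.isLt; intro hc; omega

lemma sum_ite_int2 (c : ℤ) (x : ℝ) :
    ∑ q : Fin n, (if 2 * (q : ℤ) = c then x else 0) =
      if 0 ≤ c ∧ c < 2 * n ∧ c % 2 = 0 then x else 0 := by
  by_cases h : 0 ≤ c ∧ c < 2 * n ∧ c % 2 = 0
  · rw [if_pos h]
    rw [Finset.sum_eq_single_of_mem (⟨(c / 2).toNat, by omega⟩ : Fin n) (Finset.mem_univ _)]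
    · rw [if_pos (by simp; omega)]
    · intro q _ hq
      rw [if_neg]
      intro hc
      exact hq (by apply Fin.ext; simp at hc ⊢; omega)
  · rw [if_neg h]
    exact Finset.sum_eq_zero fun q _ => by
      rw [if_neg]; have := q.isLt; intro hc; omega

lemma sum_sep (c1 c2 : ℤ) (x : ℝ) :
    (∑ w : Fin n × Fin n, if (w.1 : ℤ) = c1 ∧ (w.2 : ℤ) = c2 then x else 0)
      = if (0 ≤ c1 ∧ c1 < n) ∧ (0 ≤ c2 ∧ c2 < n) then x else 0 := by
  rw [Fintype.sum_prod_type]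
  have step1 : ∀ p : Fin n,
      (∑ q : Fin n, if (p : ℤ) = c1 ∧ (q : ℤ) = c2 then x else 0)
        = if (p : ℤ) = c1 then (if 0 ≤ c2 ∧ c2 < n then x else 0) else 0 := by
    intro p
    have : ∀ q : Fin n, (if (p : ℤ) = c1 ∧ (q : ℤ) = c2 then x else 0)
        = if (q : ℤ) = c2 then (if (p : ℤ) = c1 then x else 0) else 0 := fun q => by
      split_ifs <;> first | rfl | (exfalso; omega)
    rw [Finset.sum_congr rfl fun q _ => this q, sum_ite_int]
    split_ifs <;> rfl
  rw [Finset.sum_congr rfl fun p _ => step1 p, sum_ite_int]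
  split_ifs <;> first | rfl | (exfalso; omega)

lemma sum_sep2 (c1 c2 : ℤ) (x : ℝ) :
    (∑ w : Fin n × Fin n, if 2 * (w.1 : ℤ) = c1 ∧ 2 * (w.2 : ℤ) = c2 then x else 0)
      = if (0 ≤ c1 ∧ c1 < 2 * n ∧ c1 % 2 = 0) ∧ (0 ≤ c2 ∧ c2 < 2 * n ∧ c2 % 2 = 0)
        then x else 0 := by
  rw [Fintype.sum_prod_type]
  have step1 : ∀ p : Fin n,
      (∑ q : Fin n, if 2 * (p : ℤ) = c1 ∧ 2 * (q : ℤ) = c2 then x else 0)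
        = if 2 * (p : ℤ) = c1 then (if 0 ≤ c2 ∧ c2 < 2 * n ∧ c2 % 2 = 0 then x else 0)
          else 0 := by
    intro p
    have : ∀ q : Fin n, (if 2 * (p : ℤ) = c1 ∧ 2 * (q : ℤ) = c2 then x else 0)
        = if 2 * (q : ℤ) = c2 then (if 2 * (p : ℤ) = c1 then x else 0) else 0 := fun q => by
      split_ifs <;> first | rfl | (exfalso; omega)
    rw [Finset.sum_congr rfl fun q _ => this q, sum_ite_int2]
    split_ifs <;> rfl
  rw [Finset.sum_congr rfl fun p _ => step1 p, sum_ite_int2]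
  split_ifs <;> first | rfl | (exfalso; omega)

lemma sum_fst (c1 : ℤ) (P : Prop) [Decidable P] (x : ℝ) :
    (∑ w : Fin n × Fin n, if (w.1 : ℤ) = c1 ∧ P then x else 0)
      = (n : ℝ) * (if (0 ≤ c1 ∧ c1 < n) ∧ P then x else 0) := by
  by_cases hP : P
  · simp only [hP, and_true]
    rw [Fintype.sum_prod_type]
    have step1 : ∀ p : Fin n, (∑ _q : Fin n, if (p : ℤ) = c1 then x else 0)
        = (n : ℝ) * (if (p : ℤ) = c1 then x else 0) := fun p => by
      rw [Finset.sum_const, Finset.card_univ, Fintype.card_fin, nsmul_eq_mul]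
    rw [Finset.sum_congr rfl fun p _ => step1 p, ← Finset.mul_sum, sum_ite_int]
  · simp only [hP, and_false, if_false]
    simp

lemma sum_snd (c2 : ℤ) (P : Prop) [Decidable P] (x : ℝ) :
    (∑ w : Fin n × Fin n, if (w.2 : ℤ) = c2 ∧ P then x else 0)
      = (n : ℝ) * (if (0 ≤ c2 ∧ c2 < n) ∧ P then x else 0) := by
  by_cases hP : P
  · simp only [hP, and_true]
    rw [Fintype.sum_prod_type]
    have step1 : ∀ p : Fin n, (∑ q : Fin n, if (q : ℤ) = c2 then x else 0)
        = if 0 ≤ c2 ∧ c2 < n then x else 0 := fun p => sum_ite_int n c2 x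
    rw [Finset.sum_congr rfl fun p _ => step1 p, Finset.sum_const, Finset.card_univ,
      Fintype.card_fin, nsmul_eq_mul]
  · simp only [hP, and_false, if_false]
    simp

lemma sum_diag (P : Prop) [Decidable P] (x : ℝ) :
    (∑ w : Fin n × Fin n, if (w.1 : ℤ) = (w.2 : ℤ) ∧ P then x else 0)
      = (n : ℝ) * (if P then x else 0) := by
  by_cases hP : P
  · simp only [hP, and_true, if_true]
    rw [Fintype.sum_prod_type]
    have step1 : ∀ p : Fin n, (∑ q : Fin n, if (p : ℤ) = (q : ℤ) then x else 0) = x := by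
      intro p
      have : ∀ q : Fin n, (if (p : ℤ) = (q : ℤ) then x else 0)
          = if (q : ℤ) = (p : ℤ) then x else 0 := fun q => by
        split_ifs <;> first | rfl | (exfalso; omega)
      rw [Finset.sum_congr rfl fun q _ => this q, sum_ite_int]
      rw [if_pos ⟨Int.natCast_nonneg _, by exact_mod_cast p.isLt⟩]
    rw [Finset.sum_congr rfl fun p _ => step1 p, Finset.sum_const, Finset.card_univ,
      Fintype.card_fin, nsmul_eq_mul]
  · simp only [hP, and_false, if_false]
    simp

lemma sum_anti (P : Prop) [Decidable P] (x : ℝ) :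
    (∑ w : Fin n × Fin n, if (w.1 : ℤ) + (w.2 : ℤ) = (n : ℤ) - 1 ∧ P then x else 0)
      = (n : ℝ) * (if P then x else 0) := by
  by_cases hP : P
  · simp only [hP, and_true, if_true]
    rw [Fintype.sum_prod_type]
    have step1 : ∀ p : Fin n,
        (∑ q : Fin n, if (p : ℤ) + (q : ℤ) = (n : ℤ) - 1 then x else 0) = x := by
      intro p
      have : ∀ q : Fin n, (if (p : ℤ) + (q : ℤ) = (n : ℤ) - 1 then x else 0)
          = if (q : ℤ) = (n : ℤ) - 1 - (p : ℤ) then x else 0 := fun q => by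
        split_ifs <;> first | rfl | (exfalso; omega)
      rw [Finset.sum_congr rfl fun q _ => this q, sum_ite_int]
      have := p.isLt
      rw [if_pos (by omega)]
    rw [Finset.sum_congr rfl fun p _ => step1 p, Finset.sum_const, Finset.card_univ,
      Fintype.card_fin, nsmul_eq_mul]
  · simp only [hP, and_false, if_false]
    simp

lemma ite_sub_distrib4 (P : Prop) [Decidable P] (t1 t2 t3 t4 : ℝ) :
    (if P then t1 + t2 - t3 - t4 else 0) =
      (if P then t1 else 0) + (if P then t2 else 0)
        - (if P then t3 else 0) - (if P then t4 else 0) := by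
  split_ifs <;> ring1

lemma ite_sub_distrib2 (P : Prop) [Decidable P] (t1 t2 : ℝ) :
    (if P then t1 - t2 else 0) = (if P then t1 else 0) - (if P then t2 else 0) := by
  split_ifs <;> ring1

end Helpers
section VecEq
variable (n : ℕ)

lemma Fvec_eq (L : ℤ) (hL0 : 0 ≤ L) (hLn : 2 * L + 3 ≤ (n : ℤ)) (w : Fin n × Fin n) :
    Fvec n (L + 1) w =
      (if (w.2 : ℤ) = L then (1 : ℝ) else 0) + (if (w.2 : ℤ) = (n : ℤ) - 1 - L then 1 else 0)
      - (if (w.1 : ℤ) = L then 1 else 0) - (if (w.1 : ℤ) = (n : ℤ) - 1 - L then 1 else 0) := by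
  unfold Fvec Cvec Rvec
  split_ifs <;> first | (exfalso; omega) | norm_num

lemma Pvec_eq (w : Fin n × Fin n) :
    Pvec n ((n : ℤ) - 4) w =
      if (w.1 : ℤ) = (w.2 : ℤ) then (((n : ℤ) - ((n : ℤ) - 1) / 2 : ℤ) : ℝ) else 0 := by
  unfold Pvec
  rw [show (n : ℤ) - ((n : ℤ) - 4 + 4) = 0 from by ring,
    show (n : ℤ) - 4 + 4 - ((n : ℤ) - 1) / 2 = (n : ℤ) - ((n : ℤ) - 1) / 2 from by ring]
  simp only [abs_eq_zero, sub_eq_zero,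
    (fun x : ℤ => iff_false_intro (abs_nonneg x).not_gt : ∀ x : ℤ, |x| < 0 ↔ False),
    false_and, if_false]
  split_ifs <;> first | rfl | (exfalso; omega)

lemma Qvec_eq (w : Fin n × Fin n) :
    Qvec n ((n : ℤ) - 4) w =
      -(if (w.1 : ℤ) + (w.2 : ℤ) = (n : ℤ) - 1 then (((n : ℤ) - ((n : ℤ) - 1) / 2 : ℤ) : ℝ)
        else 0) := by
  unfold Qvec
  rw [show (n : ℤ) - ((n : ℤ) - 4 + 4) = 0 from by ring,
    show (n : ℤ) - 4 + 4 - ((n : ℤ) - 1) / 2 = (n : ℤ) - ((n : ℤ) - 1) / 2 from by ring]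
  simp only [abs_eq_zero, sub_eq_zero,
    (fun x : ℤ => iff_false_intro (abs_nonneg x).not_gt : ∀ x : ℤ, |x| < 0 ↔ False),
    false_and, if_false]
  split_ifs <;> first | (exfalso; omega) | norm_num

lemma Evec_eq (w : Fin n × Fin n) :
    Evec n ((n : ℤ) - 4) w =
      (if (w.1 : ℤ) = (w.2 : ℤ) then (((n : ℤ) - ((n : ℤ) - 1) / 2 : ℤ) : ℝ) else 0)
      - (if (w.1 : ℤ) + (w.2 : ℤ) = (n : ℤ) - 1 then (((n : ℤ) - ((n : ℤ) - 1) / 2 : ℤ) : ℝ)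
        else 0) := by
  rw [Evec, Pvec_eq, Qvec_eq]
  ring

end VecEq
lemma decomp (n : ℕ) (f : Fin n × Fin n → ℝ) (u : Fin n × Fin n) :
    ((queensGraph n).adjMatrix ℝ *ᵥ f) u =
      (∑ w : Fin n × Fin n, if (w.1 : ℤ) = u.1 then f w else 0)
    + (∑ w : Fin n × Fin n, if (w.2 : ℤ) = u.2 then f w else 0)
    + (∑ w : Fin n × Fin n, if (w.1 : ℤ) + w.2 = u.1 + u.2 then f w else 0)
    + (∑ w : Fin n × Fin n, if (w.1 : ℤ) - w.2 = u.1 - u.2 then f w else 0)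
    - 4 * f u := by
  have key : ∀ w : Fin n × Fin n,
      (if (queensGraph n).Adj u w then f w else 0) =
      ((((if (w.1 : ℤ) = u.1 then f w else 0)
      + (if (w.2 : ℤ) = u.2 then f w else 0))
      + (if (w.1 : ℤ) + w.2 = u.1 + u.2 then f w else 0))
      + (if (w.1 : ℤ) - w.2 = u.1 - u.2 then f w else 0))
      - (if w = u then 4 * f u else 0) := by
    intro w
    by_cases hw : w = u
    · subst hw
      have hna : ¬ (queensGraph n).Adj w w := (queensGraph n).loopless.irrefl w
      rw [if_neg hna, if_pos rfl, if_pos rfl, if_pos rfl, if_pos rfl, if_pos rfl]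
      ring
    · have hne : ¬((w.1 : ℤ) = u.1 ∧ (w.2 : ℤ) = u.2) := by
        intro ⟨h1, h2⟩
        exact hw (Prod.ext (Fin.ext (by omega)) (Fin.ext (by omega)))
      rw [if_neg hw]
      have hadj : (queensGraph n).Adj u w ↔ ((u.1 : ℤ) = w.1 ∨ (u.2 : ℤ) = w.2 ∨
          (u.1 : ℤ) + u.2 = w.1 + w.2 ∨ (u.1 : ℤ) - u.2 = w.1 - w.2) :=
        ⟨fun h => h.2, fun h => ⟨fun he => hw (he.symm), h⟩⟩
      rw [if_congr hadj rfl rfl]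
      split_ifs <;> first | ring1 | (exfalso; omega)
  have h1 : ((queensGraph n).adjMatrix ℝ *ᵥ f) u
      = ∑ w : Fin n × Fin n, (if (queensGraph n).Adj u w then f w else 0) := by
    rw [Matrix.mulVec]
    simp [dotProduct, SimpleGraph.adjMatrix_apply, ite_mul]
  rw [h1, Finset.sum_congr rfl (fun w _ => key w), Finset.sum_sub_distrib,
    Finset.sum_add_distrib, Finset.sum_add_distrib, Finset.sum_add_distrib,
    Finset.sum_ite_eq' Finset.univ u (fun _ => 4 * f u)]
  simp
section FLines
variable (n : ℕ) (L : ℤ)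

lemma Frow (hL0 : 0 ≤ L) (hLn : 2 * L + 3 ≤ (n : ℤ)) (a : ℤ) (ha : 0 ≤ a ∧ a < n) :
    (∑ w : Fin n × Fin n, if (w.1 : ℤ) = a then Fvec n (L + 1) w else 0)
      = 2 - (n : ℝ) * (if a = L then 1 else 0)
          - (n : ℝ) * (if a = (n : ℤ) - 1 - L then 1 else 0) := by
  simp only [Fvec_eq n L hL0 hLn, ite_sub_distrib4]
  rw [Finset.sum_sub_distrib, Finset.sum_sub_distrib, Finset.sum_add_distrib]
  have e1 : (∑ w : Fin n × Fin n,
        if (w.1 : ℤ) = a then (if (w.2 : ℤ) = L then (1:ℝ) else 0) else 0)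
      = ∑ w : Fin n × Fin n, if (w.1 : ℤ) = a ∧ (w.2 : ℤ) = L then (1:ℝ) else 0 :=
    Finset.sum_congr rfl fun w _ => by split_ifs <;> first | rfl | (exfalso; omega)
  have e2 : (∑ w : Fin n × Fin n,
        if (w.1 : ℤ) = a then (if (w.2 : ℤ) = (n : ℤ) - 1 - L then (1:ℝ) else 0) else 0)
      = ∑ w : Fin n × Fin n, if (w.1 : ℤ) = a ∧ (w.2 : ℤ) = (n : ℤ) - 1 - L then (1:ℝ) else 0 :=
    Finset.sum_congr rfl fun w _ => by split_ifs <;> first | rfl | (exfalso; omega)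
  have e3 : (∑ w : Fin n × Fin n,
        if (w.1 : ℤ) = a then (if (w.1 : ℤ) = L then (1:ℝ) else 0) else 0)
      = ∑ w : Fin n × Fin n, if (w.1 : ℤ) = a ∧ a = L then (1:ℝ) else 0 :=
    Finset.sum_congr rfl fun w _ => by split_ifs <;> first | rfl | (exfalso; omega)
  have e4 : (∑ w : Fin n × Fin n,
        if (w.1 : ℤ) = a then (if (w.1 : ℤ) = (n : ℤ) - 1 - L then (1:ℝ) else 0) else 0)
      = ∑ w : Fin n × Fin n, if (w.1 : ℤ) = a ∧ a = (n : ℤ) - 1 - L then (1:ℝ) else 0 :=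
    Finset.sum_congr rfl fun w _ => by split_ifs <;> first | rfl | (exfalso; omega)
  rw [e1, e2, e3, e4, sum_sep, sum_sep, sum_fst, sum_fst]
  split_ifs <;> first | ring1 | (exfalso; omega)

lemma Fcol (hL0 : 0 ≤ L) (hLn : 2 * L + 3 ≤ (n : ℤ)) (b : ℤ) (hb : 0 ≤ b ∧ b < n) :
    (∑ w : Fin n × Fin n, if (w.2 : ℤ) = b then Fvec n (L + 1) w else 0)
      = (n : ℝ) * (if b = L then 1 else 0)
          + (n : ℝ) * (if b = (n : ℤ) - 1 - L then 1 else 0) - 2 := by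
  simp only [Fvec_eq n L hL0 hLn, ite_sub_distrib4]
  rw [Finset.sum_sub_distrib, Finset.sum_sub_distrib, Finset.sum_add_distrib]
  have e1 : (∑ w : Fin n × Fin n,
        if (w.2 : ℤ) = b then (if (w.2 : ℤ) = L then (1:ℝ) else 0) else 0)
      = ∑ w : Fin n × Fin n, if (w.2 : ℤ) = b ∧ b = L then (1:ℝ) else 0 :=
    Finset.sum_congr rfl fun w _ => by split_ifs <;> first | rfl | (exfalso; omega)
  have e2 : (∑ w : Fin n × Fin n,
        if (w.2 : ℤ) = b then (if (w.2 : ℤ) = (n : ℤ) - 1 - L then (1:ℝ) else 0) else 0)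
      = ∑ w : Fin n × Fin n, if (w.2 : ℤ) = b ∧ b = (n : ℤ) - 1 - L then (1:ℝ) else 0 :=
    Finset.sum_congr rfl fun w _ => by split_ifs <;> first | rfl | (exfalso; omega)
  have e3 : (∑ w : Fin n × Fin n,
        if (w.2 : ℤ) = b then (if (w.1 : ℤ) = L then (1:ℝ) else 0) else 0)
      = ∑ w : Fin n × Fin n, if (w.1 : ℤ) = L ∧ (w.2 : ℤ) = b then (1:ℝ) else 0 :=
    Finset.sum_congr rfl fun w _ => by split_ifs <;> first | rfl | (exfalso; omega)
  have e4 : (∑ w : Fin n × Fin n,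
        if (w.2 : ℤ) = b then (if (w.1 : ℤ) = (n : ℤ) - 1 - L then (1:ℝ) else 0) else 0)
      = ∑ w : Fin n × Fin n, if (w.1 : ℤ) = (n : ℤ) - 1 - L ∧ (w.2 : ℤ) = b then (1:ℝ) else 0 :=
    Finset.sum_congr rfl fun w _ => by split_ifs <;> first | rfl | (exfalso; omega)
  rw [e1, e2, e3, e4, sum_snd, sum_snd, sum_sep, sum_sep]
  split_ifs <;> first | ring1 | (exfalso; omega)

lemma Fanti (hL0 : 0 ≤ L) (hLn : 2 * L + 3 ≤ (n : ℤ)) (s : ℤ) :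
    (∑ w : Fin n × Fin n, if (w.1 : ℤ) + (w.2 : ℤ) = s then Fvec n (L + 1) w else 0) = 0 := by
  simp only [Fvec_eq n L hL0 hLn, ite_sub_distrib4]
  rw [Finset.sum_sub_distrib, Finset.sum_sub_distrib, Finset.sum_add_distrib]
  have e1 : (∑ w : Fin n × Fin n,
        if (w.1 : ℤ) + (w.2 : ℤ) = s then (if (w.2 : ℤ) = L then (1:ℝ) else 0) else 0)
      = ∑ w : Fin n × Fin n, if (w.1 : ℤ) = s - L ∧ (w.2 : ℤ) = L then (1:ℝ) else 0 :=
    Finset.sum_congr rfl fun w _ => by split_ifs <;> first | rfl | (exfalso; omega)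
  have e2 : (∑ w : Fin n × Fin n,
        if (w.1 : ℤ) + (w.2 : ℤ) = s then (if (w.2 : ℤ) = (n : ℤ) - 1 - L then (1:ℝ) else 0) else 0)
      = ∑ w : Fin n × Fin n,
          if (w.1 : ℤ) = s - ((n : ℤ) - 1 - L) ∧ (w.2 : ℤ) = (n : ℤ) - 1 - L then (1:ℝ) else 0 :=
    Finset.sum_congr rfl fun w _ => by split_ifs <;> first | rfl | (exfalso; omega)
  have e3 : (∑ w : Fin n × Fin n,
        if (w.1 : ℤ) + (w.2 : ℤ) = s then (if (w.1 : ℤ) = L then (1:ℝ) else 0) else 0)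
      = ∑ w : Fin n × Fin n, if (w.1 : ℤ) = L ∧ (w.2 : ℤ) = s - L then (1:ℝ) else 0 :=
    Finset.sum_congr rfl fun w _ => by split_ifs <;> first | rfl | (exfalso; omega)
  have e4 : (∑ w : Fin n × Fin n,
        if (w.1 : ℤ) + (w.2 : ℤ) = s then (if (w.1 : ℤ) = (n : ℤ) - 1 - L then (1:ℝ) else 0) else 0)
      = ∑ w : Fin n × Fin n,
          if (w.1 : ℤ) = (n : ℤ) - 1 - L ∧ (w.2 : ℤ) = s - ((n : ℤ) - 1 - L) then (1:ℝ) else 0 :=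
    Finset.sum_congr rfl fun w _ => by split_ifs <;> first | rfl | (exfalso; omega)
  rw [e1, e2, e3, e4, sum_sep, sum_sep, sum_sep, sum_sep]
  split_ifs <;> first | ring1 | (exfalso; omega)

lemma Fdiag (hL0 : 0 ≤ L) (hLn : 2 * L + 3 ≤ (n : ℤ)) (d : ℤ) :
    (∑ w : Fin n × Fin n, if (w.1 : ℤ) - (w.2 : ℤ) = d then Fvec n (L + 1) w else 0) = 0 := by
  simp only [Fvec_eq n L hL0 hLn, ite_sub_distrib4]
  rw [Finset.sum_sub_distrib, Finset.sum_sub_distrib, Finset.sum_add_distrib]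
  have e1 : (∑ w : Fin n × Fin n,
        if (w.1 : ℤ) - (w.2 : ℤ) = d then (if (w.2 : ℤ) = L then (1:ℝ) else 0) else 0)
      = ∑ w : Fin n × Fin n, if (w.1 : ℤ) = L + d ∧ (w.2 : ℤ) = L then (1:ℝ) else 0 :=
    Finset.sum_congr rfl fun w _ => by split_ifs <;> first | rfl | (exfalso; omega)
  have e2 : (∑ w : Fin n × Fin n,
        if (w.1 : ℤ) - (w.2 : ℤ) = d then (if (w.2 : ℤ) = (n : ℤ) - 1 - L then (1:ℝ) else 0) else 0)
      = ∑ w : Fin n × Fin n,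
          if (w.1 : ℤ) = (n : ℤ) - 1 - L + d ∧ (w.2 : ℤ) = (n : ℤ) - 1 - L then (1:ℝ) else 0 :=
    Finset.sum_congr rfl fun w _ => by split_ifs <;> first | rfl | (exfalso; omega)
  have e3 : (∑ w : Fin n × Fin n,
        if (w.1 : ℤ) - (w.2 : ℤ) = d then (if (w.1 : ℤ) = L then (1:ℝ) else 0) else 0)
      = ∑ w : Fin n × Fin n, if (w.1 : ℤ) = L ∧ (w.2 : ℤ) = L - d then (1:ℝ) else 0 :=
    Finset.sum_congr rfl fun w _ => by split_ifs <;> first | rfl | (exfalso; omega)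
  have e4 : (∑ w : Fin n × Fin n,
        if (w.1 : ℤ) - (w.2 : ℤ) = d then (if (w.1 : ℤ) = (n : ℤ) - 1 - L then (1:ℝ) else 0) else 0)
      = ∑ w : Fin n × Fin n,
          if (w.1 : ℤ) = (n : ℤ) - 1 - L ∧ (w.2 : ℤ) = (n : ℤ) - 1 - L - d then (1:ℝ) else 0 :=
    Finset.sum_congr rfl fun w _ => by split_ifs <;> first | rfl | (exfalso; omega)
  rw [e1, e2, e3, e4, sum_sep, sum_sep, sum_sep, sum_sep]
  split_ifs <;> first | ring1 | (exfalso; omega)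

lemma eigenF (hL0 : 0 ≤ L) (hLn : 2 * L + 3 ≤ (n : ℤ)) :
    (queensGraph n).adjMatrix ℝ *ᵥ Fvec n (L + 1) = ((n : ℝ) - 4) • Fvec n (L + 1) := by
  funext u
  have ha : (0:ℤ) ≤ (u.1 : ℤ) ∧ ((u.1 : ℤ)) < n :=
    ⟨Int.natCast_nonneg _, by exact_mod_cast u.1.isLt⟩
  have hb : (0:ℤ) ≤ (u.2 : ℤ) ∧ ((u.2 : ℤ)) < n :=
    ⟨Int.natCast_nonneg _, by exact_mod_cast u.2.isLt⟩
  rw [Pi.smul_apply, smul_eq_mul, decomp, Frow n L hL0 hLn _ ha, Fcol n L hL0 hLn _ hb,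
    Fanti n L hL0 hLn _, Fdiag n L hL0 hLn _, Fvec_eq n L hL0 hLn u]
  split_ifs <;> first | ring1 | (exfalso; omega)

end FLines
section ELines
variable (n : ℕ)

lemma Erow (a : ℤ) (ha : 0 ≤ a ∧ a < n) :
    (∑ w : Fin n × Fin n, if (w.1 : ℤ) = a then Evec n ((n : ℤ) - 4) w else 0) = 0 := by
  simp only [Evec_eq n, ite_sub_distrib2]
  rw [Finset.sum_sub_distrib]
  have e1 : (∑ w : Fin n × Fin n,
        if (w.1 : ℤ) = a then
          (if (w.1 : ℤ) = (w.2 : ℤ) then (((n : ℤ) - ((n : ℤ) - 1) / 2 : ℤ) : ℝ) else 0) else 0)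
      = ∑ w : Fin n × Fin n, if (w.1 : ℤ) = a ∧ (w.2 : ℤ) = a
          then (((n : ℤ) - ((n : ℤ) - 1) / 2 : ℤ) : ℝ) else 0 :=
    Finset.sum_congr rfl fun w _ => by split_ifs <;> first | rfl | (exfalso; omega)
  have e2 : (∑ w : Fin n × Fin n,
        if (w.1 : ℤ) = a then
          (if (w.1 : ℤ) + (w.2 : ℤ) = (n : ℤ) - 1
            then (((n : ℤ) - ((n : ℤ) - 1) / 2 : ℤ) : ℝ) else 0) else 0)
      = ∑ w : Fin n × Fin n, if (w.1 : ℤ) = a ∧ (w.2 : ℤ) = (n : ℤ) - 1 - a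
          then (((n : ℤ) - ((n : ℤ) - 1) / 2 : ℤ) : ℝ) else 0 :=
    Finset.sum_congr rfl fun w _ => by split_ifs <;> first | rfl | (exfalso; omega)
  rw [e1, e2, sum_sep, sum_sep]
  split_ifs <;> first | ring1 | (exfalso; omega)

lemma Ecol (b : ℤ) (hb : 0 ≤ b ∧ b < n) :
    (∑ w : Fin n × Fin n, if (w.2 : ℤ) = b then Evec n ((n : ℤ) - 4) w else 0) = 0 := by
  simp only [Evec_eq n, ite_sub_distrib2]
  rw [Finset.sum_sub_distrib]
  have e1 : (∑ w : Fin n × Fin n,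
        if (w.2 : ℤ) = b then
          (if (w.1 : ℤ) = (w.2 : ℤ) then (((n : ℤ) - ((n : ℤ) - 1) / 2 : ℤ) : ℝ) else 0) else 0)
      = ∑ w : Fin n × Fin n, if (w.1 : ℤ) = b ∧ (w.2 : ℤ) = b
          then (((n : ℤ) - ((n : ℤ) - 1) / 2 : ℤ) : ℝ) else 0 :=
    Finset.sum_congr rfl fun w _ => by split_ifs <;> first | rfl | (exfalso; omega)
  have e2 : (∑ w : Fin n × Fin n,
        if (w.2 : ℤ) = b then
          (if (w.1 : ℤ) + (w.2 : ℤ) = (n : ℤ) - 1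
            then (((n : ℤ) - ((n : ℤ) - 1) / 2 : ℤ) : ℝ) else 0) else 0)
      = ∑ w : Fin n × Fin n, if (w.1 : ℤ) = (n : ℤ) - 1 - b ∧ (w.2 : ℤ) = b
          then (((n : ℤ) - ((n : ℤ) - 1) / 2 : ℤ) : ℝ) else 0 :=
    Finset.sum_congr rfl fun w _ => by split_ifs <;> first | rfl | (exfalso; omega)
  rw [e1, e2, sum_sep, sum_sep]
  split_ifs <;> first | ring1 | (exfalso; omega)

lemma Ediag (hodd : n % 2 = 1) (d : ℤ) (hd : -(n : ℤ) + 1 ≤ d ∧ d ≤ (n : ℤ) - 1) :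
    (∑ w : Fin n × Fin n, if (w.1 : ℤ) - (w.2 : ℤ) = d then Evec n ((n : ℤ) - 4) w else 0)
      = (n : ℝ) * (if d = 0 then (((n : ℤ) - ((n : ℤ) - 1) / 2 : ℤ) : ℝ) else 0)
        - (if d % 2 = 0 then (((n : ℤ) - ((n : ℤ) - 1) / 2 : ℤ) : ℝ) else 0) := by
  simp only [Evec_eq n, ite_sub_distrib2]
  rw [Finset.sum_sub_distrib]
  have e1 : (∑ w : Fin n × Fin n,
        if (w.1 : ℤ) - (w.2 : ℤ) = d then
          (if (w.1 : ℤ) = (w.2 : ℤ) then (((n : ℤ) - ((n : ℤ) - 1) / 2 : ℤ) : ℝ) else 0) else 0)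
      = ∑ w : Fin n × Fin n, if (w.1 : ℤ) = (w.2 : ℤ) ∧ d = 0
          then (((n : ℤ) - ((n : ℤ) - 1) / 2 : ℤ) : ℝ) else 0 :=
    Finset.sum_congr rfl fun w _ => by split_ifs <;> first | rfl | (exfalso; omega)
  have e2 : (∑ w : Fin n × Fin n,
        if (w.1 : ℤ) - (w.2 : ℤ) = d then
          (if (w.1 : ℤ) + (w.2 : ℤ) = (n : ℤ) - 1
            then (((n : ℤ) - ((n : ℤ) - 1) / 2 : ℤ) : ℝ) else 0) else 0)
      = ∑ w : Fin n × Fin n,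
          if 2 * (w.1 : ℤ) = (n : ℤ) - 1 + d ∧ 2 * (w.2 : ℤ) = (n : ℤ) - 1 - d
          then (((n : ℤ) - ((n : ℤ) - 1) / 2 : ℤ) : ℝ) else 0 :=
    Finset.sum_congr rfl fun w _ => by split_ifs <;> first | rfl | (exfalso; omega)
  rw [e1, e2, sum_diag, sum_sep2]
  split_ifs <;> first | ring1 | (exfalso; omega)

lemma Eanti (hodd : n % 2 = 1) (s : ℤ) (hs : 0 ≤ s ∧ s ≤ 2 * (n : ℤ) - 2) :
    (∑ w : Fin n × Fin n, if (w.1 : ℤ) + (w.2 : ℤ) = s then Evec n ((n : ℤ) - 4) w else 0)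
      = (if s % 2 = 0 then (((n : ℤ) - ((n : ℤ) - 1) / 2 : ℤ) : ℝ) else 0)
        - (n : ℝ) * (if s = (n : ℤ) - 1 then (((n : ℤ) - ((n : ℤ) - 1) / 2 : ℤ) : ℝ) else 0) := by
  simp only [Evec_eq n, ite_sub_distrib2]
  rw [Finset.sum_sub_distrib]
  have e1 : (∑ w : Fin n × Fin n,
        if (w.1 : ℤ) + (w.2 : ℤ) = s then
          (if (w.1 : ℤ) = (w.2 : ℤ) then (((n : ℤ) - ((n : ℤ) - 1) / 2 : ℤ) : ℝ) else 0) else 0)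
      = ∑ w : Fin n × Fin n, if 2 * (w.1 : ℤ) = s ∧ 2 * (w.2 : ℤ) = s
          then (((n : ℤ) - ((n : ℤ) - 1) / 2 : ℤ) : ℝ) else 0 :=
    Finset.sum_congr rfl fun w _ => by split_ifs <;> first | rfl | (exfalso; omega)
  have e2 : (∑ w : Fin n × Fin n,
        if (w.1 : ℤ) + (w.2 : ℤ) = s then
          (if (w.1 : ℤ) + (w.2 : ℤ) = (n : ℤ) - 1
            then (((n : ℤ) - ((n : ℤ) - 1) / 2 : ℤ) : ℝ) else 0) else 0)
      = ∑ w : Fin n × Fin n, if (w.1 : ℤ) + (w.2 : ℤ) = (n : ℤ) - 1 ∧ s = (n : ℤ) - 1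
          then (((n : ℤ) - ((n : ℤ) - 1) / 2 : ℤ) : ℝ) else 0 :=
    Finset.sum_congr rfl fun w _ => by split_ifs <;> first | rfl | (exfalso; omega)
  rw [e1, e2, sum_sep2, sum_anti]
  split_ifs <;> first | ring1 | (exfalso; omega)

lemma eigenE (hn : 3 ≤ n) (hodd : n % 2 = 1) :
    (queensGraph n).adjMatrix ℝ *ᵥ Evec n ((n : ℤ) - 4)
      = ((n : ℝ) - 4) • Evec n ((n : ℤ) - 4) := by
  funext u
  have ha : (0:ℤ) ≤ (u.1 : ℤ) ∧ ((u.1 : ℤ)) < n :=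
    ⟨Int.natCast_nonneg _, by exact_mod_cast u.1.isLt⟩
  have hb : (0:ℤ) ≤ (u.2 : ℤ) ∧ ((u.2 : ℤ)) < n :=
    ⟨Int.natCast_nonneg _, by exact_mod_cast u.2.isLt⟩
  rw [Pi.smul_apply, smul_eq_mul, decomp, Erow n _ ha, Ecol n _ hb,
    Eanti n hodd _ (by omega), Ediag n hodd _ (by omega), Evec_eq n u]
  split_ifs <;> first | ring1 | (exfalso; omega)

end ELines
/-- for odd `n ≥ 3`, `{E_{n,n-4}, F_{n,1}, …, F_{n,(n-1)/2}}` is a linearly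
independent set of `(n+1)/2` eigenvectors of `Q(n)` associated with `n-4`; consequently
`n-4` is an eigenvalue of `Q(n)` of multiplicity at least `(n+1)/2`. -/
theorem stmt14 (n : ℕ) (hn : 3 ≤ n) (hodd : Odd n) :
    (∀ x : Unit ⊕ Fin ((n - 1) / 2),
      (queensGraph n).adjMatrix ℝ *ᵥ
          Sum.elim (fun _ : Unit => Evec n ((n : ℤ) - 4))
            (fun l : Fin ((n - 1) / 2) => Fvec n ((l : ℤ) + 1)) x =
        ((n : ℝ) - 4) • Sum.elim (fun _ : Unit => Evec n ((n : ℤ) - 4))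
            (fun l : Fin ((n - 1) / 2) => Fvec n ((l : ℤ) + 1)) x ∧
      Sum.elim (fun _ : Unit => Evec n ((n : ℤ) - 4))
          (fun l : Fin ((n - 1) / 2) => Fvec n ((l : ℤ) + 1)) x ≠ 0) ∧
    LinearIndependent ℝ
      (Sum.elim (fun _ : Unit => Evec n ((n : ℤ) - 4))
        (fun l : Fin ((n - 1) / 2) => Fvec n ((l : ℤ) + 1))) ∧
    (n + 1) / 2 ≤ Module.finrank ℝ
      (Module.End.eigenspace (Matrix.toLin' ((queensGraph n).adjMatrix ℝ)) ((n : ℝ) - 4)) := by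
  have hodd' : n % 2 = 1 := Nat.odd_iff.mp hodd
  have hK : (((n : ℤ) - ((n : ℤ) - 1) / 2 : ℤ) : ℝ) ≠ 0 :=
    Int.cast_ne_zero.mpr (by omega)
  have hL0 : ∀ l : Fin ((n - 1) / 2), (0 : ℤ) ≤ (l : ℤ) := fun l => Int.natCast_nonneg _
  have hLn : ∀ l : Fin ((n - 1) / 2), 2 * (l : ℤ) + 3 ≤ (n : ℤ) := fun l => by
    have := l.isLt; omega
  -- the diagonal vertex (0,0)
  have hz0 : (0 : ℕ) < n := by omega
  set z₀ : Fin n × Fin n := (⟨0, hz0⟩, ⟨0, hz0⟩) with hz₀def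
  have hEz₀ : Evec n ((n : ℤ) - 4) z₀ = (((n : ℤ) - ((n : ℤ) - 1) / 2 : ℤ) : ℝ) := by
    rw [Evec_eq n z₀]
    have h1 : ((z₀.1 : ℤ)) = (z₀.2 : ℤ) := rfl
    have h2 : ((z₀.1 : ℤ)) = 0 := by simp [hz₀def]
    rw [if_pos h1, if_neg (by omega)]
    ring
  have hFz₀ : ∀ l : Fin ((n - 1) / 2), Fvec n ((l : ℤ) + 1) z₀ = 0 := fun l => by
    rw [Fvec_eq n (l : ℤ) (hL0 l) (hLn l) z₀]
    have h1 : ((z₀.1 : ℤ)) = (z₀.2 : ℤ) := rfl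
    split_ifs <;> first | (exfalso; omega) | ring1
  -- the vertices used to isolate the F coefficients
  have hmid : (n - 1) / 2 < n := by omega
  have hFzm : ∀ m l : Fin ((n - 1) / 2),
      Fvec n ((l : ℤ) + 1) ((⟨(n - 1) / 2, hmid⟩ : Fin n), (⟨(m : ℕ), by omega⟩ : Fin n))
        = if l = m then 1 else 0 := by
    intro m l
    rw [Fvec_eq n (l : ℤ) (hL0 l) (hLn l)]
    have ha : ((((⟨(n - 1) / 2, hmid⟩ : Fin n), (⟨(m : ℕ), by omega⟩ : Fin n)).1 : ℤ))
        = ((n : ℤ) - 1) / 2 := by simp; omega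
    have hb : ((((⟨(n - 1) / 2, hmid⟩ : Fin n), (⟨(m : ℕ), by omega⟩ : Fin n)).2 : ℤ))
        = (m : ℤ) := by simp
    simp only [ha, hb]
    have hm := m.isLt
    have hl := l.isLt
    by_cases hlm : l = m
    · subst hlm
      rw [if_pos rfl]
      split_ifs <;> first | (exfalso; omega) | ring1
    · rw [if_neg hlm]
      have hml : ¬((m : ℤ) = (l : ℤ)) := fun hc => hlm (Fin.ext (by omega))
      split_ifs <;> first | (exfalso; omega) | ring1
  -- Part 1: eigenvector equations and nonvanishing
  have part1 : ∀ x : Unit ⊕ Fin ((n - 1) / 2),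
      (queensGraph n).adjMatrix ℝ *ᵥ
          Sum.elim (fun _ : Unit => Evec n ((n : ℤ) - 4))
            (fun l : Fin ((n - 1) / 2) => Fvec n ((l : ℤ) + 1)) x =
        ((n : ℝ) - 4) • Sum.elim (fun _ : Unit => Evec n ((n : ℤ) - 4))
            (fun l : Fin ((n - 1) / 2) => Fvec n ((l : ℤ) + 1)) x ∧
      Sum.elim (fun _ : Unit => Evec n ((n : ℤ) - 4))
          (fun l : Fin ((n - 1) / 2) => Fvec n ((l : ℤ) + 1)) x ≠ 0 := by
    rintro (u | l)
    · refine ⟨eigenE n hn hodd', fun h => hK ?_⟩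
      have h1 := congrFun h z₀
      simp only [Sum.elim_inl, Pi.zero_apply] at h1
      rw [hEz₀] at h1
      exact h1
    · refine ⟨eigenF n (l : ℤ) (hL0 l) (hLn l), fun h => ?_⟩
      have h1 := congrFun h ((⟨(n - 1) / 2, hmid⟩ : Fin n), (⟨(l : ℕ), by omega⟩ : Fin n))
      simp only [Sum.elim_inr, Pi.zero_apply] at h1
      rw [hFzm l l, if_pos rfl] at h1
      exact one_ne_zero h1
  -- Part 2: linear independence
  have part2 : LinearIndependent ℝ
      (Sum.elim (fun _ : Unit => Evec n ((n : ℤ) - 4))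
        (fun l : Fin ((n - 1) / 2) => Fvec n ((l : ℤ) + 1))) := by
    rw [Fintype.linearIndependent_iff]
    intro g hg
    have key : ∀ z : Fin n × Fin n,
        g (Sum.inl ()) * Evec n ((n : ℤ) - 4) z
          + ∑ l : Fin ((n - 1) / 2), g (Sum.inr l) * Fvec n ((l : ℤ) + 1) z = 0 := by
      intro z
      have h1 := congrFun hg z
      rw [Finset.sum_apply, Pi.zero_apply] at h1
      rw [Fintype.sum_sum_type] at h1
      simpa using h1
    have hg0 : g (Sum.inl ()) = 0 := by
      have h1 := key z₀
      rw [hEz₀] at h1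
      simp only [hFz₀, mul_zero, Finset.sum_const_zero, add_zero] at h1
      exact (mul_eq_zero.mp h1).resolve_right hK
    rintro (u | m)
    · cases u; exact hg0
    · have h1 := key (⟨(n - 1) / 2, hmid⟩, (⟨(m : ℕ), by omega⟩ : Fin n))
      have hEzm : Evec n ((n : ℤ) - 4)
          ((⟨(n - 1) / 2, hmid⟩ : Fin n), (⟨(m : ℕ), by omega⟩ : Fin n)) = 0 := by
        rw [Evec_eq n]
        have hm := m.isLt
        rw [if_neg (by simp; omega), if_neg (by simp; omega)]
        ring
      rw [hEzm, mul_zero, zero_add] at h1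
      have h2 : ∀ l : Fin ((n - 1) / 2),
          g (Sum.inr l) * Fvec n ((l : ℤ) + 1)
            ((⟨(n - 1) / 2, hmid⟩ : Fin n), (⟨(m : ℕ), by omega⟩ : Fin n))
          = if l = m then g (Sum.inr l) else 0 := fun l => by
        rw [hFzm m l]
        split_ifs <;> ring1
      rw [Finset.sum_congr rfl fun l _ => h2 l, Finset.sum_ite_eq' Finset.univ m
        (fun l => g (Sum.inr l))] at h1
      simpa using h1
  refine ⟨part1, part2, ?_⟩
  -- Part 3: finrank bound
  set S := Module.End.eigenspace (Matrix.toLin' ((queensGraph n).adjMatrix ℝ)) ((n : ℝ) - 4)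
    with hSdef
  have hmem : ∀ x : Unit ⊕ Fin ((n - 1) / 2),
      Sum.elim (fun _ : Unit => Evec n ((n : ℤ) - 4))
        (fun l : Fin ((n - 1) / 2) => Fvec n ((l : ℤ) + 1)) x ∈ S := fun x => by
    rw [hSdef, Module.End.mem_eigenspace_iff, Matrix.toLin'_apply]
    exact (part1 x).1
  have hLI : LinearIndependent ℝ (fun x : Unit ⊕ Fin ((n - 1) / 2) =>
      (⟨Sum.elim (fun _ : Unit => Evec n ((n : ℤ) - 4))
        (fun l : Fin ((n - 1) / 2) => Fvec n ((l : ℤ) + 1)) x, hmem x⟩ : S)) := by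
    apply LinearIndependent.of_comp S.subtype
    exact part2
  have hcard := hLI.fintype_card_le_finrank
  have hcard' : Fintype.card (Unit ⊕ Fin ((n - 1) / 2)) = 1 + (n - 1) / 2 := by simp
  rw [hcard'] at hcard
  omega
end

section
/- For odd n ≥ 4 and integer λ with 1 ≤ λ+4 ≤ n, for every ℓ ∈ [n], the row sums of P_{n,λ} and Q_{n,λ} are opposite: ∑_{j=1}^n P_{n,λ}(ℓ,j) = -∑_{j=1}^n Q_{n,λ}(ℓ,j), and likewise the column sums: ∑_{i=1}^n P_{n,λ}(i,ℓ) = -∑_{i=1}^n Q_{n,λ}(i,ℓ). -/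
open Finset Matrix

/-!
Reflecting the column index, `j ↦ n + 1 - j`, interchanges `i ⊖ j` and `i ⊕ j`, so
`Q(i, j) = -P(i, n + 1 - j)`; reindexing a row sum by this reflection gives the row identity.
Both `P` and `Q` are symmetric, so the column identity is the row identity.
-/

lemma Pvec_swap (n : ℕ) (lam : ℤ) (a b : Fin n) : Pvec n lam (b, a) = Pvec n lam (a, b) := by
  simp only [Pvec, abs_sub_comm ((b : ℤ) + 1), add_comm ((b : ℤ) + 1)]

lemma Qvec_swap (n : ℕ) (lam : ℤ) (a b : Fin n) : Qvec n lam (b, a) = Qvec n lam (a, b) := by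
  simp only [Qvec, abs_sub_comm ((b : ℤ) + 1), add_comm ((b : ℤ) + 1)]

lemma Qvec_eq_neg_Pvec_rev (n : ℕ) (lam : ℤ) (a b : Fin n) :
    Qvec n lam (a, b) = -Pvec n lam (a, b.rev) := by
  have hrev : ((b.rev : ℕ) : ℤ) = n - 1 - b := by
    have := b.isLt
    rw [Fin.val_rev]
    omega
  have hsub : (a + 1 : ℤ) - (b.rev + 1) = a + 1 + (b + 1) - (n + 1) := by rw [hrev]; ring
  have hadd : (a + 1 : ℤ) + (b.rev + 1) - (n + 1) = a + 1 - (b + 1) := by rw [hrev]; ring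
  simp only [Qvec, Pvec, hsub, hadd]
  split_ifs <;> simp

lemma sum_Pvec_row_eq_neg_sum_Qvec_row (n : ℕ) (lam : ℤ) (l : Fin n) :
    ∑ j, Pvec n lam (l, j) = -∑ j, Qvec n lam (l, j) := by
  simp only [Qvec_eq_neg_Pvec_rev, sum_neg_distrib, neg_neg]
  exact (Equiv.sum_comp Fin.revPerm (fun j => Pvec n lam (l, j))).symm

theorem stmt18_general (n : ℕ) (lam : ℤ) (l : Fin n) :
    (∑ j : Fin n, Pvec n lam (l, j)) = -(∑ j : Fin n, Qvec n lam (l, j)) ∧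
    (∑ i : Fin n, Pvec n lam (i, l)) = -(∑ i : Fin n, Qvec n lam (i, l)) := by
  refine ⟨sum_Pvec_row_eq_neg_sum_Qvec_row n lam l, ?_⟩
  simpa only [Pvec_swap, Qvec_swap] using sum_Pvec_row_eq_neg_sum_Qvec_row n lam l

/-- for each `ℓ`, the `ℓ`-th row sums of `P_{n,λ}` and `Q_{n,λ}` are
opposite, and likewise the column sums. -/
theorem stmt18 (n : ℕ) (hn : 4 ≤ n) (hodd : Odd n) (lam : ℤ)
    (h1 : 1 ≤ lam + 4) (h2 : lam + 4 ≤ (n : ℤ)) (l : Fin n) :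
    (∑ j : Fin n, Pvec n lam (l, j)) = -(∑ j : Fin n, Qvec n lam (l, j)) ∧
    (∑ i : Fin n, Pvec n lam (i, l)) = -(∑ i : Fin n, Qvec n lam (i, l)) :=
  stmt18_general n lam l
end
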